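/- Let α ≥ β ≥ 0 with α + β > 1 and α > 1. Then there exists a constant C > 0 such that for every integer n, the sum over all pairs of integers (n1, n2) with n = n1 + n2 of 1/(⟨n1⟩^α * ⟨n2⟩^β) is at most C/⟨n⟩^β, where ⟨m⟩ = (1 + m^2)^{1/2}. -/

import Mathlib

open scoped BigOperators

noncomputable def jap (m : ℤ) : ℝ := Real.sqrt (1 + (m : ℝ) ^ 2)

lemma jap_one_le (m : ℤ) : 1 ≤ jap m := by
  have h := Real.sqrt_le_sqrt (show (1:ℝ) ≤ 1 + (m:ℝ)^2 from le_add_of_nonneg_right (by positivity))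
  simpa [jap] using h

lemma jap_pos (m : ℤ) : 0 < jap m := lt_of_lt_of_le one_pos (jap_one_le m)

lemma abs_le_jap (m : ℤ) : |(m:ℝ)| ≤ jap m := by
  rw [jap, show |(m:ℝ)| = Real.sqrt ((m:ℝ)^2) by rw [Real.sqrt_sq_eq_abs]]
  exact Real.sqrt_le_sqrt (by nlinarith)

lemma jap_add_le (a b : ℤ) : jap (a + b) ≤ 2 * max (jap a) (jap b) := by
  have ha := jap_one_le a
  have hb := jap_one_le b
  rcases le_total (jap a) (jap b) with h | h
  · rw [max_eq_right h]
    have : jap (a+b) ^ 2 ≤ (2 * jap b)^2 := by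
      have h2 : jap a ^ 2 ≤ jap b ^ 2 := by nlinarith
      have e1 : jap (a+b) ^ 2 = 1 + ((a:ℝ)+b)^2 := by
        rw [jap]; push_cast; rw [Real.sq_sqrt (by positivity)]
      have e2 : jap a ^ 2 = 1 + (a:ℝ)^2 := by rw [jap, Real.sq_sqrt (by positivity)]
      have e3 : jap b ^ 2 = 1 + (b:ℝ)^2 := by rw [jap, Real.sq_sqrt (by positivity)]
      nlinarith [sq_nonneg ((a:ℝ) - b), sq_nonneg ((a:ℝ)+b), sq_nonneg ((a:ℝ)*b)]
    nlinarith [jap_pos (a+b), jap_pos b]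
  · rw [max_eq_left h]
    have : jap (a+b) ^ 2 ≤ (2 * jap a)^2 := by
      have e1 : jap (a+b) ^ 2 = 1 + ((a:ℝ)+b)^2 := by
        rw [jap]; push_cast; rw [Real.sq_sqrt (by positivity)]
      have e2 : jap a ^ 2 = 1 + (a:ℝ)^2 := by rw [jap, Real.sq_sqrt (by positivity)]
      have e3 : jap b ^ 2 = 1 + (b:ℝ)^2 := by rw [jap, Real.sq_sqrt (by positivity)]
      nlinarith [sq_nonneg ((a:ℝ) - b)]
    nlinarith [jap_pos (a+b), jap_pos a]

lemma summable_jap (α : ℝ) (hα : 1 < α) : Summable (fun k : ℤ => 1 / jap k ^ α) := by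
  have hmaj : Summable (fun k : ℤ => |(k:ℝ)| ^ (-α) + if k = 0 then (1:ℝ) else 0) := by
    apply (Real.summable_abs_int_rpow hα).add
    apply summable_of_ne_finset_zero (s := {0})
    intro k hk
    simp only [Finset.mem_singleton] at hk
    simp [hk]
  apply Summable.of_nonneg_of_le (fun k => one_div_nonneg.mpr (Real.rpow_nonneg (jap_pos k).le α)) _ hmaj
  intro k
  rcases eq_or_ne k 0 with rfl | hk
  · have h0 : jap 0 = 1 := by simp [jap]
    rw [h0, Real.one_rpow]
    simp only [if_pos rfl]
    have h1 := Real.rpow_nonneg (abs_nonneg ((0:ℤ):ℝ)) (-α)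
    simp only [Int.cast_zero, abs_zero] at h1 ⊢
    norm_num
    linarith
  · have h1 : (1:ℝ) ≤ |(k:ℝ)| := by
      rw [← Int.cast_abs]; exact_mod_cast Int.one_le_abs hk
    have h2 : |(k:ℝ)| ^ α ≤ jap k ^ α :=
      Real.rpow_le_rpow (abs_nonneg _) (abs_le_jap k) (by linarith)
    have : 1 / jap k ^ α ≤ 1 / |(k:ℝ)| ^ α := by
      apply one_div_le_one_div_of_le (by positivity) h2
    calc 1 / jap k ^ α ≤ 1 / |(k:ℝ)| ^ α := this
      _ = |(k:ℝ)| ^ (-α) := by rw [Real.rpow_neg (abs_nonneg _), one_div]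
      _ ≤ _ := le_add_of_nonneg_right (by split <;> norm_num)

lemma key_bound (α β : ℝ) (hβ : 0 ≤ β) (hβα : β ≤ α) (n n1 : ℤ) :
    1 / (jap n1 ^ α * jap (n - n1) ^ β) ≤
      (2:ℝ) ^ β / jap n ^ β * (1 / jap n1 ^ α + 1 / jap (n - n1) ^ α) := by
  set a := jap n1 with ha
  set b := jap (n - n1) with hb
  set c := jap n with hc
  have hapos : 0 < a := jap_pos n1
  have hbpos : 0 < b := jap_pos (n - n1)
  have hcpos : 0 < c := jap_pos n
  have hmax : c ≤ 2 * max a b := by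
    have := jap_add_le n1 (n - n1)
    simpa [hc, ha, hb] using this
  have haα : (0:ℝ) < a ^ α := Real.rpow_pos_of_pos hapos α
  have hbα : (0:ℝ) < b ^ α := Real.rpow_pos_of_pos hbpos α
  have haβ : (0:ℝ) < a ^ β := Real.rpow_pos_of_pos hapos β
  have hbβ : (0:ℝ) < b ^ β := Real.rpow_pos_of_pos hbpos β
  have hcβ : (0:ℝ) < c ^ β := Real.rpow_pos_of_pos hcpos β
  rcases le_total a b with hab | hab
  · -- b is the max : c ≤ 2 b
    have hcb : c ≤ 2 * b := by rw [max_eq_right hab] at hmax; exact hmax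
    have h1 : c ^ β ≤ 2 ^ β * b ^ β := by
      calc c ^ β ≤ (2 * b) ^ β := Real.rpow_le_rpow hcpos.le hcb hβ
        _ = 2 ^ β * b ^ β := Real.mul_rpow (by norm_num) hbpos.le
    have h2 : 1 / b ^ β ≤ 2 ^ β / c ^ β := by
      rw [div_le_div_iff₀ hbβ hcβ]; linarith
    calc 1 / (a ^ α * b ^ β) = (1 / b ^ β) * (1 / a ^ α) := by
          rw [one_div_mul_eq_div, div_div, mul_comm]
      _ ≤ (2 ^ β / c ^ β) * (1 / a ^ α) := by
          apply mul_le_mul_of_nonneg_right h2 (by positivity)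
      _ ≤ _ := by
          apply mul_le_mul_of_nonneg_left _ (by positivity)
          have : (0:ℝ) ≤ 1 / b ^ α := by positivity
          linarith
  · -- a is the max : c ≤ 2 a
    have hca : c ≤ 2 * a := by rw [max_eq_left hab] at hmax; exact hmax
    have h1 : c ^ β ≤ 2 ^ β * a ^ β := by
      calc c ^ β ≤ (2 * a) ^ β := Real.rpow_le_rpow hcpos.le hca hβ
        _ = 2 ^ β * a ^ β := Real.mul_rpow (by norm_num) hapos.le
    have h2 : 1 / a ^ β ≤ 2 ^ β / c ^ β := by
      rw [div_le_div_iff₀ haβ hcβ]; linarith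
    have h3 : a ^ β * b ^ α ≤ a ^ α * b ^ β := by
      have ea : a ^ α = a ^ β * a ^ (α - β) := by
        rw [← Real.rpow_add hapos]; ring_nf
      have eb : b ^ α = b ^ β * b ^ (α - β) := by
        rw [← Real.rpow_add hbpos]; ring_nf
      have hle : b ^ (α - β) ≤ a ^ (α - β) :=
        Real.rpow_le_rpow hbpos.le hab (by linarith)
      rw [ea, eb]
      have hpb : (0:ℝ) < b ^ (α - β) := Real.rpow_pos_of_pos hbpos _
      nlinarith [mul_le_mul_of_nonneg_left hle (mul_pos haβ hbβ).le]
    have h4 : 1 / (a ^ α * b ^ β) ≤ 1 / (a ^ β * b ^ α) :=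
      one_div_le_one_div_of_le (by positivity) h3
    calc 1 / (a ^ α * b ^ β) ≤ 1 / (a ^ β * b ^ α) := h4
      _ = (1 / a ^ β) * (1 / b ^ α) := by rw [one_div_mul_one_div]
      _ ≤ (2 ^ β / c ^ β) * (1 / b ^ α) :=
          mul_le_mul_of_nonneg_right h2 (by positivity)
      _ ≤ _ := by
          apply mul_le_mul_of_nonneg_left _ (by positivity)
          have : (0:ℝ) ≤ 1 / a ^ α := by positivity
          linarith

/-- Discrete convolution lemma (case `α > 1`): for `α ≥ β ≥ 0` with `α + β > 1` and `α > 1`,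
there is `C > 0` such that `∑_{n = n1 + n2} ⟨n1⟩^{-α} ⟨n2⟩^{-β} ≤ C ⟨n⟩^{-β}`. -/
theorem discrete_convolution_lemma (α β : ℝ) (hβ : 0 ≤ β) (hβα : β ≤ α)
    (hsum : 1 < α + β) (hα : 1 < α) :
    ∃ C > 0, ∀ n : ℤ,
      (∑' n1 : ℤ, 1 / (jap n1 ^ α * jap (n - n1) ^ β)) ≤ C / jap n ^ β := by
  have hS := summable_jap α hα
  set S := ∑' k : ℤ, 1 / jap k ^ α with hSdef
  have hterm : ∀ k : ℤ, 0 ≤ 1 / jap k ^ α := fun k =>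
    le_of_lt (div_pos one_pos (Real.rpow_pos_of_pos (jap_pos k) α))
  have hSpos : 0 < S :=
    Summable.tsum_pos hS hterm 0 (div_pos one_pos (Real.rpow_pos_of_pos (jap_pos 0) α))
  refine ⟨2 ^ β * (2 * S), by positivity, fun n => ?_⟩
  have hcβ : (0:ℝ) < jap n ^ β := Real.rpow_pos_of_pos (jap_pos n) β
  have hshift : Summable (fun n1 : ℤ => 1 / jap (n - n1) ^ α) := by
    have := hS.comp_injective (Equiv.subLeft n).injective
    simpa [Function.comp_def] using this
  have hg : Summable (fun n1 : ℤ =>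
      (2:ℝ) ^ β / jap n ^ β * (1 / jap n1 ^ α + 1 / jap (n - n1) ^ α)) :=
    (hS.add hshift).mul_left _
  have hf : Summable (fun n1 : ℤ => 1 / (jap n1 ^ α * jap (n - n1) ^ β)) := by
    apply Summable.of_nonneg_of_le _ (fun n1 => key_bound α β hβ hβα n n1) hg
    intro n1
    exact le_of_lt (div_pos one_pos (mul_pos (Real.rpow_pos_of_pos (jap_pos n1) α)
      (Real.rpow_pos_of_pos (jap_pos (n - n1)) β)))
  have hshift_eq : (∑' n1 : ℤ, 1 / jap (n - n1) ^ α) = S := by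
    have := Equiv.tsum_eq (Equiv.subLeft n) (fun k : ℤ => 1 / jap k ^ α)
    simp only [Equiv.subLeft_apply] at this
    rw [hSdef]; exact this
  calc (∑' n1 : ℤ, 1 / (jap n1 ^ α * jap (n - n1) ^ β))
      ≤ ∑' n1 : ℤ, (2:ℝ) ^ β / jap n ^ β * (1 / jap n1 ^ α + 1 / jap (n - n1) ^ α) :=
        Summable.tsum_le_tsum (fun n1 => key_bound α β hβ hβα n n1) hf hg
    _ = (2:ℝ) ^ β / jap n ^ β * (S + S) := by
        rw [tsum_mul_left, Summable.tsum_add hS hshift, hshift_eq]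
    _ = 2 ^ β * (2 * S) / jap n ^ β := by
        rw [div_mul_eq_mul_div]; ring_nf
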